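/- arXiv:0805.0816 — 4 statements merged into one kernel-verified Lean document; each statement's English description precedes it below -/
import Mathlib

section
/- For Schwartz functions f, g : ℝ → ℂ, the double integral of the Wigner transform recovers the inner product: ∫∫ W(f,g)(x,ξ) dx dξ = 2√π · ⟨f, g⟩, where ⟨f, g⟩ = ∫ conj(f(x)) g(x) dx. -/
open MeasureTheory

/-- One-dimensional Wigner transform. -/
noncomputable def Wig (f g : ℝ → ℂ) (x ξ : ℝ) : ℂ :=
  (Real.sqrt (2 * Real.pi) : ℂ)⁻¹ *
    ∫ p : ℝ, Complex.exp (Complex.I * p * ξ) *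
      (starRingEnd ℂ) (f ((x + p) / Real.sqrt 2)) * g ((x - p) / Real.sqrt 2)

/-- Extended Wigner transform of a function of two variables. -/
noncomputable def ExtW (F : ℝ → ℝ → ℂ) (x ξ : ℝ) : ℂ :=
  (Real.sqrt (2 * Real.pi) : ℂ)⁻¹ *
    ∫ p : ℝ, Complex.exp (Complex.I * p * ξ) *
      F ((x + p) / Real.sqrt 2) ((x - p) / Real.sqrt 2)

/-- The n-th Hermite function. -/
noncomputable def hermiteFun (n : ℕ) (x : ℝ) : ℝ :=
  Real.pi ^ (-(1/4 : ℝ)) * ((Nat.factorial n : ℝ)) ^ (-(1/2 : ℝ)) *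
    (2 : ℝ) ^ (-(n : ℝ)/2) * (-1 : ℝ)^n * Real.exp (x^2/2) *
    iteratedDeriv n (fun t => Real.exp (-t^2)) x

/-- Generalized Laguerre polynomial via the Rodrigues formula. -/
noncomputable def lagPoly (n α : ℕ) (x : ℝ) : ℝ :=
  Real.exp x / (Nat.factorial n * x ^ α) *
    iteratedDeriv n (fun t => Real.exp (-t) * t ^ (n + α)) x

/-- Two-dimensional Wigner transform. -/
noncomputable def Wig2 (f g : ℝ × ℝ → ℂ) (x ξ : ℝ × ℝ) : ℂ :=
  (2 * Real.pi : ℂ)⁻¹ * ∫ p : ℝ × ℝ,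
    Complex.exp (Complex.I * (p.1 * ξ.1 + p.2 * ξ.2)) *
    (starRingEnd ℂ) (f ((x.1 + p.1) / Real.sqrt 2, (x.2 + p.2) / Real.sqrt 2)) *
    g ((x.1 - p.1) / Real.sqrt 2, (x.2 - p.2) / Real.sqrt 2)

/-!
For fixed `x`, the integrand `p ↦ conj (f ((x + p) / √2)) * g ((x - p) / √2)` of the Wigner
transform is a Schwartz function `h`, and integrating `ξ ↦ ∫ e^{ipξ} h(p) dp` is, after the
substitution `ξ = 2πw`, integrating an inverse Fourier transform, which by Fourier inversion at
`0` gives `2π h(0)`. Hence `∫ W(f,g)(x,ξ) dξ = √(2π) conj (f (x/√2)) g (x/√2)`, and the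
substitution `x = √2 t` contributes the remaining factor `√2`, with `√(2π) √2 = 2√π`.
-/

open Complex
open scoped FourierTransform SchwartzMap

lemma integral_cexp_mul_smul_eq_fourierInv {E : Type*} [NormedAddCommGroup E] [NormedSpace ℂ E]
    (h : ℝ → E) (ξ : ℝ) :
    ∫ p : ℝ, cexp (I * p * ξ) • h p = 𝓕⁻ h (ξ / (2 * Real.pi)) := by
  rw [Real.fourierInv_eq']
  congr 1 with p
  congr 2
  simp only [RCLike.inner_apply, conj_trivial]
  push_cast
  field_simp

namespace SchwartzMap

section Affine

variable {F : Type*} [NormedAddCommGroup F] [NormedSpace ℝ F]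

noncomputable def compMulAdd (f : 𝓢(ℝ, F)) {a : ℝ} (ha : a ≠ 0) (b : ℝ) : 𝓢(ℝ, F) :=
  compSubConstCLM ℝ (-(b / a))
    (compCLMOfContinuousLinearEquiv ℝ (ContinuousLinearEquiv.unitsEquivAut ℝ (Units.mk0 a ha)) f)

@[simp]
lemma compMulAdd_apply (f : 𝓢(ℝ, F)) {a : ℝ} (ha : a ≠ 0) (b p : ℝ) :
    f.compMulAdd ha b p = f (a * p + b) := by
  simp only [compMulAdd, compSubConstCLM_apply, compCLMOfContinuousLinearEquiv_apply,
    Function.comp_apply, ContinuousLinearEquiv.unitsEquivAut_apply, Units.val_mk0]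
  congr 1
  field_simp
  ring

end Affine

noncomputable def conj {E : Type*} [NormedAddCommGroup E] [NormedSpace ℝ E] (f : 𝓢(E, ℂ)) :
    𝓢(E, ℂ) :=
  postcompCLM (Complex.conjCLE : ℂ →L[ℝ] ℂ) f

@[simp]
lemma conj_apply {E : Type*} [NormedAddCommGroup E] [NormedSpace ℝ E] (f : 𝓢(E, ℂ)) (x : E) :
    conj f x = starRingEnd ℂ (f x) :=
  rfl

section Fourier

variable {E : Type*} [NormedAddCommGroup E] [NormedSpace ℂ E] [CompleteSpace E]

lemma integral_fourierInv (h : 𝓢(ℝ, E)) : ∫ w : ℝ, 𝓕⁻ (h : ℝ → E) w = h 0 := by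
  have := congrArg (· 0) (FourierInvPair.fourier_fourierInv_eq (F := 𝓢(ℝ, E)) h)
  rw [fourier_coe, fourierInv_coe, Real.fourier_real_eq] at this
  simpa using this

theorem integral_integral_cexp_mul_smul (h : 𝓢(ℝ, E)) :
    ∫ ξ : ℝ, ∫ p : ℝ, cexp (I * p * ξ) • h p = (2 * Real.pi) • h 0 := by
  simp_rw [integral_cexp_mul_smul_eq_fourierInv]
  rw [Measure.integral_comp_div (fun w ↦ 𝓕⁻ (h : ℝ → E) w), integral_fourierInv,
    abs_of_pos Real.two_pi_pos]

end Fourier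

end SchwartzMap

section Wigner

open SchwartzMap

variable (f g : 𝓢(ℝ, ℂ))

noncomputable def wignerIntegrand (x : ℝ) : 𝓢(ℝ, ℂ) :=
  pairing (ContinuousLinearMap.mul ℂ ℂ)
    (conj (f.compMulAdd (a := (√2)⁻¹) (by positivity) (x / √2)))
    (g.compMulAdd (a := -(√2)⁻¹) (by simp) (x / √2))

lemma wignerIntegrand_apply (x p : ℝ) :
    wignerIntegrand f g x p = starRingEnd ℂ (f ((x + p) / √2)) * g ((x - p) / √2) := by
  simp only [wignerIntegrand, pairing_apply_apply, conj_apply, compMulAdd_apply,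
    ContinuousLinearMap.mul_apply']
  congr 3 <;> ring

lemma wig_eq_integral_wignerIntegrand (x ξ : ℝ) :
    Wig f g x ξ =
      (√(2 * Real.pi) : ℂ)⁻¹ * ∫ p : ℝ, cexp (I * p * ξ) • wignerIntegrand f g x p := by
  simp only [Wig, wignerIntegrand_apply, smul_eq_mul, mul_assoc]

lemma integral_wig_eq_sqrt_two_pi_mul (x : ℝ) :
    ∫ ξ : ℝ, Wig f g x ξ = √(2 * Real.pi) * (starRingEnd ℂ (f (x / √2)) * g (x / √2)) := by
  have hsqrt : (√(2 * Real.pi) : ℂ) ≠ 0 := by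
    exact_mod_cast (Real.sqrt_pos.2 Real.two_pi_pos).ne'
  have hsq : ((2 * Real.pi : ℝ) : ℂ) = (√(2 * Real.pi) : ℂ) * √(2 * Real.pi) := by
    exact_mod_cast (Real.mul_self_sqrt Real.two_pi_pos.le).symm
  simp_rw [wig_eq_integral_wignerIntegrand, integral_const_mul,
    integral_integral_cexp_mul_smul, wignerIntegrand_apply, add_zero, sub_zero,
    Complex.real_smul, hsq]
  field_simp

end Wigner

lemma sqrt_two_pi_mul_sqrt_two : √(2 * Real.pi) * √2 = 2 * √Real.pi := by
  rw [← Real.sqrt_mul Real.two_pi_pos.le, show 2 * Real.pi * 2 = 2 ^ 2 * Real.pi by ring,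
    Real.sqrt_mul (by positivity), Real.sqrt_sq zero_le_two]

/-- The double integral of the Wigner transform recovers the inner product. -/
theorem wig_double_integral (f g : SchwartzMap ℝ ℂ) :
    ∫ x : ℝ, ∫ ξ : ℝ, Wig (⇑f) (⇑g) x ξ
      = 2 * (Real.sqrt Real.pi : ℂ) * ∫ t : ℝ, (starRingEnd ℂ) (f t) * g t := by
  simp_rw [integral_wig_eq_sqrt_two_pi_mul]
  rw [integral_const_mul,
    Measure.integral_comp_div (fun t ↦ starRingEnd ℂ (f t) * g t) √2,
    abs_of_pos (by positivity), Complex.real_smul, ← mul_assoc, ← Complex.ofReal_mul,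
    sqrt_two_pi_mul_sqrt_two]
  norm_cast
end

section
/- The extended Wigner transform intertwines a₁† with A₊†: for every Schwartz function F : ℝ² → ℂ, A₊†(W̃F) = W̃(a₁†F), where a₁† = (1/√2)(x − ∂/∂x) acts in the first variable and A₊† = (1/2)(x − ∂/∂x + i(y − ∂/∂y)). -/
open MeasureTheory

/-- First-variable creation operator a₁† = (x₁ − ∂₁)/√2. -/
noncomputable def a1dag (F : ℝ → ℝ → ℂ) : ℝ → ℝ → ℂ :=
  fun x y => (Real.sqrt 2 : ℂ)⁻¹ * ((x : ℂ) * F x y - deriv (fun t => F t y) x)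

/-- Second-variable creation operator a₂† = (x₂ − ∂₂)/√2. -/
noncomputable def a2dag (F : ℝ → ℝ → ℂ) : ℝ → ℝ → ℂ :=
  fun x y => (Real.sqrt 2 : ℂ)⁻¹ * ((y : ℂ) * F x y - deriv (fun t => F x t) y)

/-- First-variable annihilation operator a₁ = (x₁ + ∂₁)/√2. -/
noncomputable def a1op (F : ℝ → ℝ → ℂ) : ℝ → ℝ → ℂ :=
  fun x y => (Real.sqrt 2 : ℂ)⁻¹ * ((x : ℂ) * F x y + deriv (fun t => F t y) x)

/-- Second-variable annihilation operator a₂ = (x₂ + ∂₂)/√2. -/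
noncomputable def a2op (F : ℝ → ℝ → ℂ) : ℝ → ℝ → ℂ :=
  fun x y => (Real.sqrt 2 : ℂ)⁻¹ * ((y : ℂ) * F x y + deriv (fun t => F x t) y)

/-- A₊† = (1/2)(x − ∂/∂x + i(y − ∂/∂y)). -/
noncomputable def Apdag (G : ℝ → ℝ → ℂ) : ℝ → ℝ → ℂ :=
  fun x y => (1/2 : ℂ) * (((x : ℂ) * G x y - deriv (fun t => G t y) x)
      + Complex.I * ((y : ℂ) * G x y - deriv (fun t => G x t) y))

/-- A₋† = (1/2)(x − ∂/∂x − i(y − ∂/∂y)). -/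
noncomputable def Amdag (G : ℝ → ℝ → ℂ) : ℝ → ℝ → ℂ :=
  fun x y => (1/2 : ℂ) * (((x : ℂ) * G x y - deriv (fun t => G t y) x)
      - Complex.I * ((y : ℂ) * G x y - deriv (fun t => G x t) y))

/-- A₊ = (1/2)(x + ∂/∂x − i(y + ∂/∂y)). -/
noncomputable def Apop (G : ℝ → ℝ → ℂ) : ℝ → ℝ → ℂ :=
  fun x y => (1/2 : ℂ) * (((x : ℂ) * G x y + deriv (fun t => G t y) x)
      - Complex.I * ((y : ℂ) * G x y + deriv (fun t => G x t) y))

/-- A₋ = (1/2)(x + ∂/∂x + i(y + ∂/∂y)). -/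
noncomputable def Amop (G : ℝ → ℝ → ℂ) : ℝ → ℝ → ℂ :=
  fun x y => (1/2 : ℂ) * (((x : ℂ) * G x y + deriv (fun t => G t y) x)
      + Complex.I * ((y : ℂ) * G x y + deriv (fun t => G x t) y))

/-!
Along the line `p ↦ ((x + p) / √2, (x - p) / √2)` over which `ExtW` integrates, `∂ₓ` acts on `F`
as the directional derivative `∂₊` along `(1, 1) / √2`, `∂_p` as `∂₋` along `(1, -1) / √2`, and
`∂_y` brings down `i p`. Integrating `e^{ipy} ∂₋F` by parts gives `-iy ∫ e^{ipy} F`, hence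
`A₊† W̃F = ½ W̃[(x + p) F - (∂₊ + ∂₋) F]`; as `(x + p) / √2` is the first coordinate and
`∂₊ + ∂₋ = √2 ∂₁`, this is `W̃(a₁† F)`. The Schwartz decay of `F` along these lines, uniform in `x`,
justifies differentiating under the integral.
-/

open MeasureTheory SchwartzMap LineDeriv Complex

noncomputable section

def wignerLine (x p : ℝ) : ℝ × ℝ := ((x + p) / √2, (x - p) / √2)

def diagUnit : ℝ × ℝ := ((√2)⁻¹, (√2)⁻¹)

def antidiagUnit : ℝ × ℝ := ((√2)⁻¹, -(√2)⁻¹)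

end

@[fun_prop]
theorem continuous_wignerLine (x : ℝ) : Continuous (wignerLine x) := by
  unfold wignerLine; fun_prop

theorem hasDerivAt_wignerLine_left (x p : ℝ) :
    HasDerivAt (fun t => wignerLine t p) diagUnit x := by
  have h₁ : HasDerivAt (fun t : ℝ => (t + p) / √2) (√2)⁻¹ x := by
    simpa [div_eq_mul_inv] using ((hasDerivAt_id x).add_const p).div_const √2
  have h₂ : HasDerivAt (fun t : ℝ => (t - p) / √2) (√2)⁻¹ x := by
    simpa [div_eq_mul_inv] using ((hasDerivAt_id x).sub_const p).div_const √2
  exact h₁.prodMk h₂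

theorem hasDerivAt_wignerLine_right (x p : ℝ) :
    HasDerivAt (wignerLine x) antidiagUnit p := by
  have h₁ : HasDerivAt (fun q : ℝ => (x + q) / √2) (√2)⁻¹ p := by
    simpa [div_eq_mul_inv] using ((hasDerivAt_id p).const_add x).div_const √2
  have h₂ : HasDerivAt (fun q : ℝ => (x - q) / √2) (-(√2)⁻¹) p := by
    simpa [div_eq_mul_inv] using ((hasDerivAt_id p).const_sub x).div_const √2
  exact h₁.prodMk h₂

theorem diagUnit_add_antidiagUnit : diagUnit + antidiagUnit = √2 • ((1 : ℝ), (0 : ℝ)) := by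
  ext
  · simp only [diagUnit, antidiagUnit, Prod.fst_add, Prod.smul_fst, smul_eq_mul, mul_one]
    field_simp
    norm_num
  · simp [diagUnit, antidiagUnit]

theorem abs_le_sqrt_two_mul_norm_wignerLine (x p : ℝ) : |p| ≤ √2 * ‖wignerLine x p‖ := by
  have hdiff : (wignerLine x p).1 - (wignerLine x p).2 = √2 * p := by
    simp only [wignerLine]
    field_simp
    ring_nf
    simp
  have h2 : √2 * √2 = 2 := Real.mul_self_sqrt zero_le_two
  have : √2 * |p| ≤ √2 * (√2 * ‖wignerLine x p‖) := by
    calc √2 * |p| = |(wignerLine x p).1 - (wignerLine x p).2| := by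
          rw [hdiff, abs_mul, abs_of_nonneg (Real.sqrt_nonneg 2)]
      _ ≤ ‖(wignerLine x p).1‖ + ‖(wignerLine x p).2‖ := abs_sub _ _
      _ ≤ ‖wignerLine x p‖ + ‖wignerLine x p‖ := add_le_add (norm_fst_le _) (norm_snd_le _)
      _ = √2 * (√2 * ‖wignerLine x p‖) := by rw [← mul_assoc, h2]; ring
  exact le_of_mul_le_mul_left this (by positivity)

section Decay

variable {E : Type*} [NormedAddCommGroup E] [NormedSpace ℝ E] (G : 𝓢(ℝ × ℝ, E))

theorem pow_abs_mul_norm_comp_wignerLine_le (k : ℕ) (x p : ℝ) :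
    |p| ^ k * ‖G (wignerLine x p)‖ ≤ √2 ^ k * SchwartzMap.seminorm ℝ k 0 G :=
  calc |p| ^ k * ‖G (wignerLine x p)‖
      ≤ (√2 * ‖wignerLine x p‖) ^ k * ‖G (wignerLine x p)‖ := by
        gcongr; exact abs_le_sqrt_two_mul_norm_wignerLine x p
    _ = √2 ^ k * (‖wignerLine x p‖ ^ k * ‖G (wignerLine x p)‖) := by ring
    _ ≤ √2 ^ k * SchwartzMap.seminorm ℝ k 0 G := by
        gcongr; exact norm_pow_mul_le_seminorm ℝ G k _

theorem exists_pow_abs_mul_norm_comp_wignerLine_le (k : ℕ) :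
    ∃ C, ∀ x p : ℝ, |p| ^ k * ‖G (wignerLine x p)‖ ≤ C * (1 + p ^ 2)⁻¹ := by
  refine ⟨√2 ^ k * SchwartzMap.seminorm ℝ k 0 G
    + √2 ^ (k + 2) * SchwartzMap.seminorm ℝ (k + 2) 0 G, fun x p => ?_⟩
  rw [← div_eq_mul_inv, le_div_iff₀ (by positivity)]
  calc |p| ^ k * ‖G (wignerLine x p)‖ * (1 + p ^ 2)
      = |p| ^ k * ‖G (wignerLine x p)‖ + |p| ^ (k + 2) * ‖G (wignerLine x p)‖ := by
        rw [← sq_abs p]; ring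
    _ ≤ _ := add_le_add (pow_abs_mul_norm_comp_wignerLine_le G k x p)
        (pow_abs_mul_norm_comp_wignerLine_le G (k + 2) x p)

end Decay

theorem hasDerivAt_cexp_mul_ofReal (c : ℂ) (t : ℝ) :
    HasDerivAt (fun s : ℝ => exp (c * s)) (c * exp (c * t)) t := by
  simpa [mul_comm] using ((ofRealCLM.hasDerivAt (x := t)).const_mul c).cexp

theorem norm_exp_I_mul_mul (p y : ℝ) : ‖exp (I * p * y)‖ = 1 := by
  rw [mul_assoc, ← ofReal_mul, norm_exp_I_mul_ofReal]

section Calculus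

variable (G : 𝓢(ℝ × ℝ, ℂ))

theorem integrable_pow_mul_exp_mul_comp_wignerLine (k : ℕ) (x y : ℝ) :
    Integrable fun p : ℝ => (p : ℂ) ^ k * (exp (I * p * y) * G (wignerLine x p)) := by
  obtain ⟨C, hC⟩ := exists_pow_abs_mul_norm_comp_wignerLine_le G k
  refine (integrable_inv_one_add_sq.const_mul C).mono'
    (Continuous.aestronglyMeasurable (by fun_prop)) (.of_forall fun p => ?_)
  simpa [norm_exp_I_mul_mul] using hC x p

theorem integrable_exp_mul_comp_wignerLine (x y : ℝ) :
    Integrable fun p : ℝ => exp (I * p * y) * G (wignerLine x p) := by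
  simpa using integrable_pow_mul_exp_mul_comp_wignerLine G 0 x y


theorem hasDerivAt_comp_wignerLine_left (x p : ℝ) :
    HasDerivAt (fun t => G (wignerLine t p)) (∂_{diagUnit} G (wignerLine x p)) x := by
  rw [lineDerivOp_apply_eq_fderiv]
  exact G.differentiableAt.hasFDerivAt.comp_hasDerivAt x (hasDerivAt_wignerLine_left x p)

theorem hasDerivAt_comp_wignerLine_right (x p : ℝ) :
    HasDerivAt (fun q => G (wignerLine x q)) (∂_{antidiagUnit} G (wignerLine x p)) p := by
  rw [lineDerivOp_apply_eq_fderiv]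
  exact G.differentiableAt.hasFDerivAt.comp_hasDerivAt p (hasDerivAt_wignerLine_right x p)

theorem hasDerivAt_comp_mk_left (a b : ℝ) :
    HasDerivAt (fun t => G (t, b)) (∂_{((1 : ℝ), (0 : ℝ))} G (a, b)) a := by
  rw [lineDerivOp_apply_eq_fderiv]
  exact G.differentiableAt.hasFDerivAt.comp_hasDerivAt a
    ((hasDerivAt_id a).prodMk (hasDerivAt_const a b))

theorem hasDerivAt_integral_comp_wignerLine_left (x y : ℝ) :
    HasDerivAt (fun t => ∫ p : ℝ, exp (I * p * y) * G (wignerLine t p))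
      (∫ p : ℝ, exp (I * p * y) * ∂_{diagUnit} G (wignerLine x p)) x := by
  obtain ⟨C, hC⟩ := exists_pow_abs_mul_norm_comp_wignerLine_le (∂_{diagUnit} G) 0
  refine (hasDerivAt_integral_of_dominated_loc_of_deriv_le
    (bound := fun p => C * (1 + p ^ 2)⁻¹) Filter.univ_mem
    (.of_forall fun t => (integrable_exp_mul_comp_wignerLine G t y).aestronglyMeasurable)
    (integrable_exp_mul_comp_wignerLine G x y)
    (integrable_exp_mul_comp_wignerLine _ x y).aestronglyMeasurable
    (.of_forall fun p t _ => ?_) (integrable_inv_one_add_sq.const_mul C)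
    (.of_forall fun p t _ => (hasDerivAt_comp_wignerLine_left G t p).const_mul _)).2
  simpa [norm_exp_I_mul_mul] using hC t p

theorem hasDerivAt_integral_comp_wignerLine_freq (x y : ℝ) :
    HasDerivAt (fun η : ℝ => ∫ p : ℝ, exp (I * p * η) * G (wignerLine x p))
      (I * ∫ p : ℝ, (p : ℂ) * (exp (I * p * y) * G (wignerLine x p))) y := by
  obtain ⟨C, hC⟩ := exists_pow_abs_mul_norm_comp_wignerLine_le G 1
  have hint := integrable_pow_mul_exp_mul_comp_wignerLine G 1 x y
  simp only [pow_one] at hint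
  rw [← integral_const_mul]
  refine (hasDerivAt_integral_of_dominated_loc_of_deriv_le
    (F' := fun η p => I * ((p : ℂ) * (exp (I * p * η) * G (wignerLine x p))))
    (bound := fun p => C * (1 + p ^ 2)⁻¹) Filter.univ_mem
    (.of_forall fun η => (integrable_exp_mul_comp_wignerLine G x η).aestronglyMeasurable)
    (integrable_exp_mul_comp_wignerLine G x y)
    (hint.const_mul I).aestronglyMeasurable
    (.of_forall fun p η _ => ?_) (integrable_inv_one_add_sq.const_mul C)
    (.of_forall fun p η _ => ?_)).2
  · simpa [norm_exp_I_mul_mul] using hC x p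
  · simpa [mul_assoc] using (hasDerivAt_cexp_mul_ofReal (I * p) η).mul_const (G (wignerLine x p))

theorem integral_exp_mul_lineDeriv_antidiagUnit (x y : ℝ) :
    ∫ p : ℝ, exp (I * p * y) * ∂_{antidiagUnit} G (wignerLine x p)
      = -(I * y) * ∫ p : ℝ, exp (I * p * y) * G (wignerLine x p) := by
  have hexp (p : ℝ) : HasDerivAt (fun q : ℝ => exp (I * q * y)) (I * y * exp (I * p * y)) p := by
    simpa [mul_right_comm _ _ (y : ℂ)] using hasDerivAt_cexp_mul_ofReal (I * y) p
  rw [integral_mul_deriv_eq_deriv_mul_of_integrable (fun p _ => hexp p)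
    (fun p _ => hasDerivAt_comp_wignerLine_right G x p)
    (integrable_exp_mul_comp_wignerLine _ x y)
    (by simpa only [Pi.mul_def, mul_assoc] using
      (integrable_exp_mul_comp_wignerLine G x y).const_mul (I * y))
    (integrable_exp_mul_comp_wignerLine G x y), ← integral_const_mul, ← integral_neg]
  simp only [mul_assoc, neg_mul]

theorem lineDerivOp_diagUnit_add_antidiagUnit (z : ℝ × ℝ) :
    ∂_{diagUnit} G z + ∂_{antidiagUnit} G z = √2 * ∂_{((1 : ℝ), (0 : ℝ))} G z := by
  rw [← add_apply, ← lineDerivOp_left_add, diagUnit_add_antidiagUnit,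
    lineDerivOp_left_smul, smul_apply, Complex.real_smul]

theorem a1dag_comp_wignerLine (x p : ℝ) :
    a1dag (fun a b => G (a, b)) ((x + p) / √2) ((x - p) / √2)
      = (2 : ℂ)⁻¹ * (((x : ℂ) + p) * G (wignerLine x p)
        - (∂_{diagUnit} G (wignerLine x p) + ∂_{antidiagUnit} G (wignerLine x p))) := by
  rw [a1dag, (hasDerivAt_comp_mk_left G _ _).deriv, lineDerivOp_diagUnit_add_antidiagUnit]
  have h2 : ((√2 : ℝ) : ℂ) * (√2 : ℝ) = 2 := by
    rw [← ofReal_mul, Real.mul_self_sqrt zero_le_two, ofReal_ofNat]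
  simp only [wignerLine]
  generalize G ((x + p) / √2, (x - p) / √2) = g
  generalize ∂_{((1 : ℝ), (0 : ℝ))} G ((x + p) / √2, (x - p) / √2) = d
  push_cast
  field_simp
  linear_combination (√2 * d - x * g - p * g) * h2

theorem integral_exp_mul_a1dag_comp_wignerLine (x y : ℝ) :
    ∫ p : ℝ, exp (I * p * y) * a1dag (fun a b => G (a, b)) ((x + p) / √2) ((x - p) / √2)
      = (2 : ℂ)⁻¹ * ((x * ∫ p : ℝ, exp (I * p * y) * G (wignerLine x p))
        + (∫ p : ℝ, (p : ℂ) * (exp (I * p * y) * G (wignerLine x p)))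
        - (∫ p : ℝ, exp (I * p * y) * ∂_{diagUnit} G (wignerLine x p))
        - ∫ p : ℝ, exp (I * p * y) * ∂_{antidiagUnit} G (wignerLine x p)) := by
  have h₀ := integrable_exp_mul_comp_wignerLine G x y
  have h₁ := integrable_pow_mul_exp_mul_comp_wignerLine G 1 x y
  simp only [pow_one] at h₁
  have hd := integrable_exp_mul_comp_wignerLine (∂_{diagUnit} G) x y
  have ha := integrable_exp_mul_comp_wignerLine (∂_{antidiagUnit} G) x y
  have hsplit (p : ℝ) : exp (I * p * y) * a1dag (fun a b => G (a, b)) ((x + p) / √2) ((x - p) / √2)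
      = (2 : ℂ)⁻¹ * ((x : ℂ) * (exp (I * p * y) * G (wignerLine x p))
        + (p : ℂ) * (exp (I * p * y) * G (wignerLine x p))
        - exp (I * p * y) * ∂_{diagUnit} G (wignerLine x p)
        - exp (I * p * y) * ∂_{antidiagUnit} G (wignerLine x p)) := by
    rw [a1dag_comp_wignerLine]; ring
  simp_rw [hsplit]
  rw [integral_const_mul, integral_sub ?_ ha, integral_sub ?_ hd, integral_add (h₀.const_mul _) h₁,
    integral_const_mul]
  · exact (h₀.const_mul _).add h₁
  · exact ((h₀.const_mul _).add h₁).sub hd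

end Calculus

/-- The extended Wigner transform intertwines a₁† with A₊†. -/
theorem extW_intertwine_a1dag (F : SchwartzMap (ℝ × ℝ) ℂ) (x y : ℝ) :
    Apdag (ExtW (fun a b => F (a, b))) x y
      = ExtW (a1dag (fun a b => F (a, b))) x y := by
  set c : ℂ := (Real.sqrt (2 * Real.pi) : ℂ)⁻¹
  have hx : deriv (fun t => ExtW (fun a b => F (a, b)) t y) x
      = c * ∫ p : ℝ, exp (I * p * y) * ∂_{diagUnit} F (wignerLine x p) :=
    ((hasDerivAt_integral_comp_wignerLine_left F x y).const_mul c).deriv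
  have hy : deriv (fun η => ExtW (fun a b => F (a, b)) x η) y
      = c * (I * ∫ p : ℝ, (p : ℂ) * (exp (I * p * y) * F (wignerLine x p))) :=
    ((hasDerivAt_integral_comp_wignerLine_freq F x y).const_mul c).deriv
  have hW : ExtW (fun a b => F (a, b)) x y = c * ∫ p : ℝ, exp (I * p * y) * F (wignerLine x p) :=
    rfl
  have hibp := integral_exp_mul_lineDeriv_antidiagUnit F x y
  rw [Apdag, hx, hy, hW, ExtW, integral_exp_mul_a1dag_comp_wignerLine]
  linear_combination (c / 2) * hibp
    - (c / 2) * (∫ p : ℝ, (p : ℂ) * (exp (I * p * y) * F (wignerLine x p))) * I_sq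
end

section
/- The extended Wigner transform intertwines a₂† with A₋†: for every Schwartz function F : ℝ² → ℂ, A₋†(W̃F) = W̃(a₂†F), where a₂† = (1/√2)(y − ∂/∂y) acts in the second variable and A₋† = (1/2)(x − ∂/∂x − i(y − ∂/∂y)). -/
open MeasureTheory

/-!
Write `W̃F(x, y) = c ∫ e^{ipy} Ψ(x, p) dp` with `Ψ = F ∘ R` for the reflection
`R(x, p) = ((x + p)/√2, (x - p)/√2)`; `Ψ` is again a Schwartz function. Differentiating under the
integral, `∂ₓ` becomes `∂₁Ψ`, `∂_y` becomes multiplication by `ip`, and integrating by parts in `p`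
turns `y` into `i∂₂Ψ`. Hence `A₋†W̃F = (c/2) ∫ e^{ipy} ((x - p)Ψ - ∂₁Ψ + ∂₂Ψ) dp`, and by the chain
rule `(x - p)Ψ - ∂₁Ψ + ∂₂Ψ = 2 (a₂†F) ∘ R`, since `R(1, -1) = (0, √2)` and the second coordinate
of `R(x, p)` is `(x - p)/√2`.
-/

open SchwartzMap LineDeriv Complex

theorem norm_cexp_I_mul_mul (p y : ℝ) : ‖cexp (I * p * y)‖ = 1 := by
  rw [show I * p * y = ((p * y : ℝ) : ℂ) * I by push_cast; ring, norm_exp_ofReal_mul_I]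

namespace SchwartzMap

variable {E V : Type*} [NormedAddCommGroup E] [NormedSpace ℝ E] [NormedAddCommGroup V]
  [NormedSpace ℝ V]

theorem norm_apply_le_mul_inv_one_add_sq_snd (Ψ : 𝓢(E × ℝ, V)) :
    ∃ C, ∀ z : E × ℝ, ‖Ψ z‖ ≤ C * (1 + z.2 ^ 2)⁻¹ := by
  refine ⟨2 ^ 2 * (Finset.Iic (2, 0)).sup (fun m => SchwartzMap.seminorm ℝ m.1 m.2) Ψ,
    fun z => ?_⟩
  have hdecay := one_add_le_sup_seminorm_apply (𝕜 := ℝ) (m := (2, 0)) le_rfl le_rfl Ψ z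
  rw [norm_iteratedFDeriv_zero] at hdecay
  have hz : 1 + z.2 ^ 2 ≤ (1 + ‖z‖) ^ 2 := by
    have : |z.2| ≤ ‖z‖ := norm_snd_le z
    nlinarith [abs_nonneg z.2, sq_abs z.2]
  rw [← div_eq_mul_inv, le_div_iff₀ (by positivity)]
  calc ‖Ψ z‖ * (1 + z.2 ^ 2) ≤ (1 + ‖z‖) ^ 2 * ‖Ψ z‖ := by
        rw [mul_comm]; gcongr
    _ ≤ _ := hdecay

theorem integrable_cexp_mul_apply_snd (Ψ : 𝓢(E × ℝ, ℂ)) (x : E) (y : ℝ) :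
    Integrable fun p : ℝ => cexp (I * p * y) * Ψ (x, p) := by
  obtain ⟨C, hC⟩ := Ψ.norm_apply_le_mul_inv_one_add_sq_snd
  refine (integrable_inv_one_add_sq.const_mul C).mono' (by fun_prop) ?_
  refine Filter.Eventually.of_forall fun p => ?_
  rw [norm_mul, norm_cexp_I_mul_mul, one_mul]
  exact hC (x, p)

/-- Unlike `Real.fourierIntegral`, no `2π` in the exponent. -/
noncomputable def partialFourierSnd (x : E) (y : ℝ) : 𝓢(E × ℝ, ℂ) →ₗ[ℂ] ℂ where
  toFun Ψ := ∫ p : ℝ, cexp (I * p * y) * Ψ (x, p)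
  map_add' Ψ Φ := by
    simp only [add_apply, mul_add]
    exact integral_add (Ψ.integrable_cexp_mul_apply_snd x y) (Φ.integrable_cexp_mul_apply_snd x y)
  map_smul' c Ψ := by
    simp only [smul_apply, smul_eq_mul, RingHom.id_apply, ← integral_const_mul]
    congr 1 with p
    ring

theorem partialFourierSnd_apply (x : E) (y : ℝ) (Ψ : 𝓢(E × ℝ, ℂ)) :
    partialFourierSnd x y Ψ = ∫ p : ℝ, cexp (I * p * y) * Ψ (x, p) := rfl

theorem hasDerivAt_partialFourierSnd_fst (Ψ : 𝓢(ℝ × ℝ, ℂ)) (x y : ℝ) :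
    HasDerivAt (fun t => partialFourierSnd t y Ψ)
      (partialFourierSnd x y (∂_{((1 : ℝ), (0 : ℝ))} Ψ)) x := by
  obtain ⟨C, hC⟩ := (∂_{((1 : ℝ), (0 : ℝ))} Ψ).norm_apply_le_mul_inv_one_add_sq_snd
  refine (hasDerivAt_integral_of_dominated_loc_of_deriv_le (μ := volume) (x₀ := x)
    (F := fun (t p : ℝ) => cexp (I * p * y) * Ψ (t, p))
    (F' := fun (t p : ℝ) => cexp (I * p * y) * (∂_{((1 : ℝ), (0 : ℝ))} Ψ) (t, p))
    (bound := fun p : ℝ => C * (1 + p ^ 2)⁻¹)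
    Filter.univ_mem (Filter.Eventually.of_forall fun t => ?_) (Ψ.integrable_cexp_mul_apply_snd x y)
    (by fun_prop) (Filter.Eventually.of_forall fun p t _ => ?_)
    (integrable_inv_one_add_sq.const_mul C) (Filter.Eventually.of_forall fun p t _ => ?_)).2
  · exact (Ψ.integrable_cexp_mul_apply_snd t y).aestronglyMeasurable
  · rw [norm_mul, norm_cexp_I_mul_mul, one_mul]
    exact hC (t, p)
  · have hline : HasDerivAt (fun t : ℝ => (t, p)) ((1 : ℝ), (0 : ℝ)) t :=
      (hasDerivAt_id t).prodMk (hasDerivAt_const t p)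
    exact ((Ψ.hasFDerivAt (t, p)).comp_hasDerivAt t hline).const_mul _

theorem smulLeftCLM_ofReal_snd_apply (Ψ : 𝓢(E × ℝ, ℂ)) (z : E × ℝ) :
    smulLeftCLM ℂ (ofRealCLM ∘L .snd ℝ E ℝ) Ψ z = z.2 * Ψ z := by
  simp [smulLeftCLM_apply_apply (ContinuousLinearMap.hasTemperateGrowth _)]

theorem hasDerivAt_partialFourierSnd_snd (Ψ : 𝓢(E × ℝ, ℂ)) (x : E) (y : ℝ) :
    HasDerivAt (fun η => partialFourierSnd x η Ψ)
      (I * partialFourierSnd x y (smulLeftCLM ℂ (ofRealCLM ∘L .snd ℝ E ℝ) Ψ)) y := by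
  set pΨ := smulLeftCLM ℂ (ofRealCLM ∘L .snd ℝ E ℝ) Ψ
  obtain ⟨C, hC⟩ := pΨ.norm_apply_le_mul_inv_one_add_sq_snd
  rw [partialFourierSnd_apply, ← integral_const_mul]
  refine (hasDerivAt_integral_of_dominated_loc_of_deriv_le (μ := volume) (x₀ := y)
    (F := fun (η p : ℝ) => cexp (I * p * η) * Ψ (x, p))
    (F' := fun (η p : ℝ) => I * (cexp (I * p * η) * pΨ (x, p)))
    (bound := fun p : ℝ => C * (1 + p ^ 2)⁻¹)
    Filter.univ_mem (Filter.Eventually.of_forall fun η => ?_) (Ψ.integrable_cexp_mul_apply_snd x y)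
    (by fun_prop) (Filter.Eventually.of_forall fun p η _ => ?_)
    (integrable_inv_one_add_sq.const_mul C) (Filter.Eventually.of_forall fun p η _ => ?_)).2
  · exact (Ψ.integrable_cexp_mul_apply_snd x η).aestronglyMeasurable
  · rw [norm_mul, norm_mul, norm_I, norm_cexp_I_mul_mul, one_mul, one_mul]
    exact hC (x, p)
  · have hexp : HasDerivAt (fun η : ℝ => cexp (I * p * η)) (cexp (I * p * η) * (I * p * 1)) η :=
      ((hasDerivAt_id η).ofReal_comp.const_mul (I * p)).cexp
    rw [smulLeftCLM_ofReal_snd_apply, show I * (cexp (I * p * η) * (p * Ψ (x, p)))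
      = cexp (I * p * η) * (I * p * 1) * Ψ (x, p) by ring]
    exact hexp.mul_const _

theorem partialFourierSnd_lineDerivOp_snd (Ψ : 𝓢(E × ℝ, ℂ)) (x : E) (y : ℝ) :
    partialFourierSnd x y (∂_{((0 : E), (1 : ℝ))} Ψ) = -(I * y) * partialFourierSnd x y Ψ := by
  have hderiv (p : ℝ) : HasDerivAt (fun p : ℝ => cexp (I * p * y) * Ψ (x, p))
      (I * y * (cexp (I * p * y) * Ψ (x, p))
        + cexp (I * p * y) * (∂_{((0 : E), (1 : ℝ))} Ψ) (x, p)) p := by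
    have hexp : HasDerivAt (fun p : ℝ => cexp (I * p * y)) (cexp (I * p * y) * (I * 1 * y)) p :=
      (((hasDerivAt_id p).ofReal_comp.const_mul I).mul_const (y : ℂ)).cexp
    have hline : HasDerivAt (fun p : ℝ => (x, p)) ((0 : E), (1 : ℝ)) p :=
      (hasDerivAt_const p x).prodMk (hasDerivAt_id p)
    rw [lineDerivOp_apply_eq_fderiv, show I * y * (cexp (I * p * y) * Ψ (x, p))
      = cexp (I * p * y) * (I * 1 * y) * Ψ (x, p) by ring]
    exact hexp.mul ((Ψ.hasFDerivAt (x, p)).comp_hasDerivAt p hline)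
  have hint := Ψ.integrable_cexp_mul_apply_snd x y
  have hint' := (∂_{((0 : E), (1 : ℝ))} Ψ).integrable_cexp_mul_apply_snd x y
  have hzero := integral_eq_zero_of_hasDerivAt_of_integrable hderiv
    ((hint.const_mul _).add hint') hint
  rw [integral_add (hint.const_mul _) hint', integral_const_mul] at hzero
  rw [partialFourierSnd_apply, partialFourierSnd_apply]
  linear_combination hzero

end SchwartzMap

noncomputable def wignerReflection : (ℝ × ℝ) ≃L[ℝ] (ℝ × ℝ) :=
  LinearEquiv.toContinuousLinearEquiv <| LinearEquiv.ofInvolutive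
    { toFun := fun z => ((z.1 + z.2) / √2, (z.1 - z.2) / √2)
      map_add' := fun z w => by ext <;> simp <;> ring
      map_smul' := fun c z => by ext <;> simp <;> ring }
    (fun z => by
      have h2 : √2 ^ 2 = 2 := Real.sq_sqrt zero_le_two
      ext <;> simp only [LinearMap.coe_mk, AddHom.coe_mk] <;> field_simp <;> rw [h2] <;> ring)

@[simp]
theorem wignerReflection_apply (z : ℝ × ℝ) :
    wignerReflection z = ((z.1 + z.2) / √2, (z.1 - z.2) / √2) := rfl

theorem extW_eq_partialFourierSnd (F : 𝓢(ℝ × ℝ, ℂ)) (x y : ℝ) :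
    ExtW (fun a b => F (a, b)) x y = (Real.sqrt (2 * Real.pi) : ℂ)⁻¹ *
      partialFourierSnd x y (compCLMOfContinuousLinearEquiv ℂ wignerReflection F) := rfl

theorem ContinuousLinearMap.apply_prod_eq {V : Type*} [NormedAddCommGroup V] [NormedSpace ℝ V]
    (D : ℝ × ℝ →L[ℝ] V) (a b : ℝ) : D (a, b) = a • D (1, 0) + b • D (0, 1) := by
  conv_lhs => rw [show ((a, b) : ℝ × ℝ) = a • ((1 : ℝ), (0 : ℝ)) + b • ((0 : ℝ), (1 : ℝ)) by simp]
  rw [map_add, map_smul, map_smul]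

theorem a2dag_comp_wignerReflection (F : 𝓢(ℝ × ℝ, ℂ)) (x p : ℝ) :
    a2dag (fun a b => F (a, b)) ((x + p) / √2) ((x - p) / √2) =
      (1 / 2 : ℂ) * ((x - p) * compCLMOfContinuousLinearEquiv ℂ wignerReflection F (x, p)
        - ∂_{((1 : ℝ), (0 : ℝ))} (compCLMOfContinuousLinearEquiv ℂ wignerReflection F) (x, p)
        + ∂_{((0 : ℝ), (1 : ℝ))} (compCLMOfContinuousLinearEquiv ℂ wignerReflection F) (x, p)) := by
  set u := (x + p) / √2
  set v := (x - p) / √2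
  have hline : HasDerivAt (fun t : ℝ => (u, t)) ((0 : ℝ), (1 : ℝ)) v :=
    (hasDerivAt_const v u).prodMk (hasDerivAt_id v)
  have hderiv := ((F.hasFDerivAt (u, v)).comp_hasDerivAt v hline).deriv
  simp only [a2dag, Function.comp_def] at hderiv ⊢
  simp only [hderiv, lineDerivOp_compCLMOfContinuousLinearEquiv,
    compCLMOfContinuousLinearEquiv_apply, Function.comp_apply, lineDerivOp_apply_eq_fderiv, wignerReflection_apply]
  set D := fderiv ℝ F (u, v)
  rw [D.apply_prod_eq ((1 + 0) / √2), D.apply_prod_eq ((0 + 1) / √2)]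
  have h2 : (√2 : ℂ) ^ 2 = 2 := by rw [← ofReal_pow, Real.sq_sqrt zero_le_two]; norm_num
  simp only [u, v, real_smul]
  push_cast
  field_simp
  linear_combination (-(x - p) * F ((x + p) / √2, (x - p) / √2) : ℂ) * h2

/-- The extended Wigner transform intertwines a₂† with A₋†. -/
theorem extW_intertwine_a2dag (F : SchwartzMap (ℝ × ℝ) ℂ) (x y : ℝ) :
    Amdag (ExtW (fun a b => F (a, b))) x y
      = ExtW (a2dag (fun a b => F (a, b))) x y := by
  set c : ℂ := (Real.sqrt (2 * Real.pi) : ℂ)⁻¹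
  set Ψ := compCLMOfContinuousLinearEquiv ℂ wignerReflection F
  set pΨ := smulLeftCLM ℂ (ofRealCLM ∘L .snd ℝ ℝ ℝ) Ψ
  set S := partialFourierSnd x y
  have hx : HasDerivAt (fun t => ExtW (fun a b => F (a, b)) t y)
      (c * S (∂_{((1 : ℝ), (0 : ℝ))} Ψ)) x :=
    (Ψ.hasDerivAt_partialFourierSnd_fst x y).const_mul c
  have hy : HasDerivAt (fun η => ExtW (fun a b => F (a, b)) x η) (c * (I * S pΨ)) y :=
    (Ψ.hasDerivAt_partialFourierSnd_snd x y).const_mul c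
  have hibp : S (∂_{((0 : ℝ), (1 : ℝ))} Ψ) = -(I * y) * S Ψ :=
    Ψ.partialFourierSnd_lineDerivOp_snd x y
  calc Amdag (ExtW (fun a b => F (a, b))) x y
      = c * ((1 / 2) * (x * S Ψ - S pΨ - S (∂_{((1 : ℝ), (0 : ℝ))} Ψ)
          + S (∂_{((0 : ℝ), (1 : ℝ))} Ψ))) := by
        rw [Amdag, hx.deriv, hy.deriv, extW_eq_partialFourierSnd, hibp]
        linear_combination (c * S pΨ / 2) * I_sq
    _ = c * S ((1 / 2 : ℂ) • ((x : ℂ) • Ψ - pΨ - ∂_{((1 : ℝ), (0 : ℝ))} Ψ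
          + ∂_{((0 : ℝ), (1 : ℝ))} Ψ)) := by
        simp only [map_add, map_sub, map_smul, smul_eq_mul]
    _ = ExtW (a2dag (fun a b => F (a, b))) x y := by
        rw [ExtW, partialFourierSnd_apply]
        congr 2 with p
        rw [a2dag_comp_wignerReflection]
        simp only [add_apply, sub_apply, smul_apply, smul_eq_mul, pΨ, smulLeftCLM_ofReal_snd_apply]
        ring
end

section
/- The extended Wigner transform intertwines the annihilation operators: for every Schwartz function F : ℝ² → ℂ, A₊(W̃F) = W̃(a₁F) and A₋(W̃F) = W̃(a₂F), where a₁ = (1/√2)(x₁ + ∂/∂x₁), a₂ = (1/√2)(x₂ + ∂/∂x₂), A₊ = (1/2)(x + ∂/∂x − i(y + ∂/∂y)), A₋ = (1/2)(x + ∂/∂x + i(y + ∂/∂y)). -/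
open MeasureTheory

/-!
Substituting the rotated coordinates `R (x, p) = ((x + p) / √2, (x - p) / √2)`, the extended
Wigner transform is `(2π)^{-1/2}` times the partial Fourier transform `∫ e^{ipy} Ψ (x, p) dp` of
`Ψ = F ∘ R` in its second variable. This transform leaves `x` and `∂ₓ` alone, turns `∂_p` into
`-i y` (integration by parts) and multiplication by `p` into `-i ∂_y`. Since `R` is an orthogonal
involution, `(a₁ F) ∘ R = ½ (x + p + ∂ₓ + ∂_p) Ψ` and `(a₂ F) ∘ R = ½ (x - p + ∂ₓ - ∂_p) Ψ`, and
transforming these gives exactly `A₊ (W̃ F)` and `A₋ (W̃ F)`.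
-/

open LineDeriv FourierTransform
open scoped SchwartzMap

theorem real_inner_one_right (x : ℝ) : inner ℝ x (1 : ℝ) = x := by simp

theorem integral_cexp_smul_eq_fourier {E : Type*} [NormedAddCommGroup E] [NormedSpace ℂ E]
    (f : ℝ → E) (y : ℝ) :
    ∫ p : ℝ, Complex.exp (Complex.I * p * y) • f p = 𝓕 f (-(y / (2 * Real.pi))) := by
  rw [Real.fourier_real_eq_integral_exp_smul]
  congr 1 with p
  congr 2
  push_cast
  field_simp

theorem Function.hasTemperateGrowth_prodMk_left (x : ℝ) :
    Function.HasTemperateGrowth (fun p : ℝ => (x, p)) := by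
  have h : (fun p : ℝ => (x, p)) = fun p => (x, 0) + ContinuousLinearMap.inr ℝ ℝ ℝ p := by
    ext p <;> simp
  rw [h]
  exact (Function.HasTemperateGrowth.const _).add (ContinuousLinearMap.hasTemperateGrowth _)

theorem Function.hasTemperateGrowth_fst :
    Function.HasTemperateGrowth (Prod.fst : ℝ × ℝ → ℝ) :=
  (ContinuousLinearMap.fst ℝ ℝ ℝ).hasTemperateGrowth

theorem Function.hasTemperateGrowth_snd :
    Function.HasTemperateGrowth (Prod.snd : ℝ × ℝ → ℝ) :=
  (ContinuousLinearMap.snd ℝ ℝ ℝ).hasTemperateGrowth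

namespace SchwartzMap

section Slice

variable (𝕜 : Type*) [RCLike 𝕜] {E : Type*} [NormedAddCommGroup E] [NormedSpace ℝ E]
  [NormedSpace 𝕜 E] [SMulCommClass ℝ 𝕜 E]

noncomputable def sliceSnd (x : ℝ) : 𝓢(ℝ × ℝ, E) →L[𝕜] 𝓢(ℝ, E) :=
  compCLM 𝕜 (Function.hasTemperateGrowth_prodMk_left x) ⟨1, 1, fun p => by
    rw [one_mul, pow_one]; exact (norm_snd_le (x, p)).trans (le_add_of_nonneg_left zero_le_one)⟩

variable {𝕜}

@[simp] theorem sliceSnd_apply (x : ℝ) (Φ : 𝓢(ℝ × ℝ, E)) (p : ℝ) :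
    sliceSnd 𝕜 x Φ p = Φ (x, p) := rfl

theorem hasDerivAt_apply_mk_left (Φ : 𝓢(ℝ × ℝ, E)) (t p : ℝ) :
    HasDerivAt (fun s => Φ (s, p)) (∂_{((1 : ℝ), (0 : ℝ))} Φ (t, p)) t :=
  (Φ.hasFDerivAt (t, p)).comp_hasDerivAt t ((hasDerivAt_id t).prodMk (hasDerivAt_const t p))

theorem hasDerivAt_apply_mk_right (Φ : 𝓢(ℝ × ℝ, E)) (t p : ℝ) :
    HasDerivAt (fun s => Φ (t, s)) (∂_{((0 : ℝ), (1 : ℝ))} Φ (t, p)) p :=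
  (Φ.hasFDerivAt (t, p)).comp_hasDerivAt p ((hasDerivAt_const p t).prodMk (hasDerivAt_id p))

theorem hasDerivAt_apply (f : 𝓢(ℝ, E)) (x : ℝ) : HasDerivAt f (∂_{(1 : ℝ)} f x) x :=
  (f.hasFDerivAt x).hasDerivAt

theorem lineDerivOp_sliceSnd (x : ℝ) (Φ : 𝓢(ℝ × ℝ, E)) :
    ∂_{(1 : ℝ)} (sliceSnd 𝕜 x Φ) = sliceSnd 𝕜 x (∂_{((0 : ℝ), (1 : ℝ))} Φ) := by
  ext p
  exact ((sliceSnd 𝕜 x Φ).hasDerivAt_apply p).unique (Φ.hasDerivAt_apply_mk_right x p)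

theorem sliceSnd_smulLeftCLM_fst (x : ℝ) (Φ : 𝓢(ℝ × ℝ, E)) :
    sliceSnd 𝕜 x (smulLeftCLM E Prod.fst Φ) = x • sliceSnd 𝕜 x Φ := by
  ext p
  simp [smulLeftCLM_apply_apply Function.hasTemperateGrowth_fst]

theorem sliceSnd_smulLeftCLM_snd (x : ℝ) (Φ : 𝓢(ℝ × ℝ, E)) :
    sliceSnd 𝕜 x (smulLeftCLM E Prod.snd Φ) = smulLeftCLM E (fun p : ℝ => p) (sliceSnd 𝕜 x Φ) := by
  ext p
  simp [smulLeftCLM_apply_apply Function.hasTemperateGrowth_snd,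
    smulLeftCLM_apply_apply Function.HasTemperateGrowth.id']

theorem exists_norm_le_inv_one_add_sq_snd (Φ : 𝓢(ℝ × ℝ, E)) :
    ∃ C, ∀ t p : ℝ, ‖Φ (t, p)‖ ≤ C * (1 + p ^ 2)⁻¹ := by
  refine ⟨2 ^ 2 * (Finset.Iic (2, 0)).sup (fun m => SchwartzMap.seminorm ℝ m.1 m.2) Φ,
    fun t p => ?_⟩
  have hdecay := one_add_le_sup_seminorm_apply (𝕜 := ℝ) (m := (2, 0)) le_rfl le_rfl Φ (t, p)
  rw [norm_iteratedFDeriv_zero] at hdecay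
  have hp : |p| ≤ ‖(t, p)‖ := norm_snd_le (t, p)
  have hsq : 1 + p ^ 2 ≤ (1 + ‖(t, p)‖) ^ 2 := by
    nlinarith [abs_nonneg p, sq_abs p]
  rw [← div_eq_mul_inv, le_div_iff₀ (by positivity)]
  calc ‖Φ (t, p)‖ * (1 + p ^ 2) ≤ (1 + ‖(t, p)‖) ^ 2 * ‖Φ (t, p)‖ := by
        rw [mul_comm]; gcongr
    _ ≤ _ := hdecay

end Slice

section PartialFourier

variable {E : Type*} [NormedAddCommGroup E] [NormedSpace ℂ E]

theorem fourier_lineDerivOp_one_apply (f : 𝓢(ℝ, E)) (w : ℝ) :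
    𝓕 (∂_{(1 : ℝ)} f) w = (2 * Real.pi * Complex.I * w) • 𝓕 f w := by
  simp only [fourier_lineDerivOp_eq, real_inner_one_right]
  rw [smul_apply, smulLeftCLM_apply_apply Function.HasTemperateGrowth.id', ← Complex.coe_smul,
    smul_smul]

theorem hasDerivAt_fourier_apply (f : 𝓢(ℝ, E)) (w : ℝ) :
    HasDerivAt ⇑(𝓕 f : 𝓢(ℝ, E))
      (-(2 * Real.pi * Complex.I) • 𝓕 (smulLeftCLM E (fun p : ℝ => p) f) w) w := by
  have h := (𝓕 f).hasDerivAt_apply w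
  simp only [lineDerivOp_fourier_eq, real_inner_one_right] at h
  rwa [fourier_smul, smul_apply] at h

-- `partialFourier x y Φ = ∫ p, exp (i p y) • Φ (x, p)` (`partialFourier_apply`); going through
-- Mathlib's `𝓕` (kernel `exp (-2πi p w)`, hence `w = -y / 2π`) makes it linear in `Φ` for free.
noncomputable def partialFourier (x y : ℝ) : 𝓢(ℝ × ℝ, E) →ₗ[ℂ] E where
  toFun Φ := 𝓕 (sliceSnd ℂ x Φ) (-(y / (2 * Real.pi)))
  map_add' Φ Ψ := by simp
  map_smul' c Φ := by simp

theorem partialFourier_eq_fourier (x y : ℝ) (Φ : 𝓢(ℝ × ℝ, E)) :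
    partialFourier x y Φ = 𝓕 (sliceSnd ℂ x Φ) (-(y / (2 * Real.pi))) := rfl

theorem partialFourier_apply (x y : ℝ) (Φ : 𝓢(ℝ × ℝ, E)) :
    partialFourier x y Φ = ∫ p : ℝ, Complex.exp (Complex.I * p * y) • Φ (x, p) := by
  rw [integral_cexp_smul_eq_fourier, partialFourier_eq_fourier, fourier_coe]
  rfl

theorem hasDerivAt_partialFourier_fst (Φ : 𝓢(ℝ × ℝ, E)) (x y : ℝ) :
    HasDerivAt (fun t => partialFourier t y Φ)
      (partialFourier x y (∂_{((1 : ℝ), (0 : ℝ))} Φ)) x := by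
  obtain ⟨C, hC⟩ := exists_norm_le_inv_one_add_sq_snd (∂_{((1 : ℝ), (0 : ℝ))} Φ)
  set w := -(y / (2 * Real.pi))
  simp only [partialFourier_eq_fourier, fourier_coe, Real.fourier_real_eq, sliceSnd_apply,
    Circle.smul_def]
  refine (hasDerivAt_integral_of_dominated_loc_of_deriv_le (𝕜 := ℝ) (μ := volume)
    (F := fun t p => (𝐞 (-(p * w)) : ℂ) • Φ (t, p))
    (F' := fun t p => (𝐞 (-(p * w)) : ℂ) • ∂_{((1 : ℝ), (0 : ℝ))} Φ (t, p))
    (bound := fun p => C * (1 + p ^ 2)⁻¹) Filter.univ_mem ?_ ?_ ?_ ?_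
    (integrable_inv_one_add_sq.const_mul C) ?_).2
  · exact Filter.Eventually.of_forall fun t =>
      (Continuous.smul (by fun_prop) (Φ.continuous.comp (by fun_prop))).aestronglyMeasurable
  · exact (sliceSnd ℂ x Φ).integrable.norm.mono'
      (Continuous.smul (by fun_prop) (Φ.continuous.comp (by fun_prop))).aestronglyMeasurable
      (Filter.Eventually.of_forall fun p => by simp [norm_smul, Circle.norm_coe])
  · exact (Continuous.smul (by fun_prop)
      ((∂_{((1 : ℝ), (0 : ℝ))} Φ).continuous.comp (by fun_prop))).aestronglyMeasurable
  · exact Filter.Eventually.of_forall fun p t _ => by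
      simpa [norm_smul, Circle.norm_coe] using hC t p
  · exact Filter.Eventually.of_forall fun p t _ =>
      (Φ.hasDerivAt_apply_mk_left t p).const_smul _

theorem hasDerivAt_partialFourier_snd (Φ : 𝓢(ℝ × ℝ, E)) (x y : ℝ) :
    HasDerivAt (fun s => partialFourier x s Φ)
      (Complex.I • partialFourier x y (smulLeftCLM E Prod.snd Φ)) y := by
  have hw := ((hasDerivAt_id' y).div_const (2 * Real.pi)).neg
  refine ((hasDerivAt_fourier_apply (sliceSnd ℂ x Φ) _).scomp y hw).congr_deriv ?_
  rw [partialFourier_eq_fourier, sliceSnd_smulLeftCLM_snd, ← Complex.coe_smul, smul_smul]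
  congr 1
  push_cast
  field_simp

theorem partialFourier_lineDerivOp_snd (Φ : 𝓢(ℝ × ℝ, E)) (x y : ℝ) :
    partialFourier x y (∂_{((0 : ℝ), (1 : ℝ))} Φ) = -(Complex.I * y) • partialFourier x y Φ := by
  rw [partialFourier_eq_fourier, ← lineDerivOp_sliceSnd, fourier_lineDerivOp_one_apply]
  congr 1
  push_cast
  field_simp

theorem partialFourier_smulLeftCLM_fst (Φ : 𝓢(ℝ × ℝ, E)) (x y : ℝ) :
    partialFourier x y (smulLeftCLM E Prod.fst Φ) = x • partialFourier x y Φ := by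
  rw [partialFourier_eq_fourier, sliceSnd_smulLeftCLM_fst, fourier_smul, smul_apply]
  rfl

end PartialFourier

end SchwartzMap

open SchwartzMap

noncomputable def wignerCoordsCLM : (ℝ × ℝ) →L[ℝ] (ℝ × ℝ) :=
  (Real.sqrt 2)⁻¹ • ((ContinuousLinearMap.fst ℝ ℝ ℝ + ContinuousLinearMap.snd ℝ ℝ ℝ).prod
    (ContinuousLinearMap.fst ℝ ℝ ℝ - ContinuousLinearMap.snd ℝ ℝ ℝ))

theorem wignerCoordsCLM_apply (a b : ℝ) :
    wignerCoordsCLM (a, b) = ((a + b) / Real.sqrt 2, (a - b) / Real.sqrt 2) := by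
  simp [wignerCoordsCLM, div_eq_inv_mul]

theorem wignerCoordsCLM_involutive : Function.Involutive wignerCoordsCLM := by
  rintro ⟨a, b⟩
  have h2 : Real.sqrt 2 ^ 2 = 2 := Real.sq_sqrt zero_le_two
  rw [wignerCoordsCLM_apply, wignerCoordsCLM_apply, Prod.mk.injEq]
  constructor <;> field_simp <;> rw [h2] <;> ring

noncomputable def wignerCoords : (ℝ × ℝ) ≃L[ℝ] (ℝ × ℝ) :=
  .equivOfInverse wignerCoordsCLM wignerCoordsCLM wignerCoordsCLM_involutive
    wignerCoordsCLM_involutive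

theorem wignerCoords_apply (a b : ℝ) :
    wignerCoords (a, b) = ((a + b) / Real.sqrt 2, (a - b) / Real.sqrt 2) :=
  wignerCoordsCLM_apply a b

section WignerComp

variable {E : Type*} [NormedAddCommGroup E] [NormedSpace ℝ E]

noncomputable def wignerComp (F : 𝓢(ℝ × ℝ, E)) : 𝓢(ℝ × ℝ, E) :=
  compCLMOfContinuousLinearEquiv ℝ wignerCoords F

theorem wignerComp_apply (F : 𝓢(ℝ × ℝ, E)) (x p : ℝ) :
    wignerComp F (x, p) = F ((x + p) / Real.sqrt 2, (x - p) / Real.sqrt 2) := by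
  simp [wignerComp, wignerCoords_apply]

theorem lineDerivOp_wignerComp (F : 𝓢(ℝ × ℝ, E)) (m : ℝ × ℝ) :
    ∂_{m} (wignerComp F) = wignerComp (∂_{wignerCoords m} F) := by
  ext z
  have h : HasFDerivAt (wignerComp F)
      ((fderiv ℝ F (wignerCoords z)).comp (wignerCoords : ℝ × ℝ →L[ℝ] ℝ × ℝ)) z :=
    (F.hasFDerivAt _).comp z wignerCoords.hasFDerivAt
  simp only [lineDerivOp_apply_eq_fderiv, h.fderiv]
  rfl

end WignerComp

theorem wignerCoords_one_zero :
    wignerCoords (1, 0) = (Real.sqrt 2)⁻¹ • (((1 : ℝ), (0 : ℝ)) + (0, 1)) := by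
  simp [wignerCoords_apply, div_eq_inv_mul]

-- `∂_{v}` has a `lineDerivOp_left_neg` lemma but no `_sub` one.
theorem wignerCoords_zero_one :
    wignerCoords (0, 1) = (Real.sqrt 2)⁻¹ • (((1 : ℝ), (0 : ℝ)) + -(0, 1)) := by
  simp [wignerCoords_apply, div_eq_inv_mul]

theorem a1op_wignerCoords (F : 𝓢(ℝ × ℝ, ℂ)) (x p : ℝ) :
    a1op (fun a b => F (a, b)) ((x + p) / Real.sqrt 2) ((x - p) / Real.sqrt 2) =
      ((1 / 2 : ℂ) • (smulLeftCLM ℂ Prod.fst (wignerComp F)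
        + smulLeftCLM ℂ Prod.snd (wignerComp F)
        + ∂_{((1 : ℝ), (0 : ℝ))} (wignerComp F) + ∂_{((0 : ℝ), (1 : ℝ))} (wignerComp F)))
        (x, p) := by
  simp only [a1op, (F.hasDerivAt_apply_mk_left _ _).deriv, add_apply, neg_apply, smul_apply,
    smulLeftCLM_apply_apply Function.hasTemperateGrowth_fst,
    smulLeftCLM_apply_apply Function.hasTemperateGrowth_snd, lineDerivOp_wignerComp,
    wignerCoords_one_zero, wignerCoords_zero_one, lineDerivOp_left_smul, lineDerivOp_left_add,
    lineDerivOp_left_neg, wignerComp_apply]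
  have h2 : (Real.sqrt 2 : ℂ) ^ 2 = 2 := by norm_cast; exact Real.sq_sqrt zero_le_two
  simp only [← Complex.coe_smul, smul_eq_mul]
  push_cast
  field_simp
  linear_combination
    (-((x : ℂ) + p) * F ((x + p) / Real.sqrt 2, (x - p) / Real.sqrt 2)) * h2

theorem a2op_wignerCoords (F : 𝓢(ℝ × ℝ, ℂ)) (x p : ℝ) :
    a2op (fun a b => F (a, b)) ((x + p) / Real.sqrt 2) ((x - p) / Real.sqrt 2) =
      ((1 / 2 : ℂ) • (smulLeftCLM ℂ Prod.fst (wignerComp F)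
        - smulLeftCLM ℂ Prod.snd (wignerComp F)
        + ∂_{((1 : ℝ), (0 : ℝ))} (wignerComp F) - ∂_{((0 : ℝ), (1 : ℝ))} (wignerComp F)))
        (x, p) := by
  simp only [a2op, (F.hasDerivAt_apply_mk_right _ _).deriv, add_apply, sub_apply, neg_apply,
    smul_apply, smulLeftCLM_apply_apply Function.hasTemperateGrowth_fst,
    smulLeftCLM_apply_apply Function.hasTemperateGrowth_snd, lineDerivOp_wignerComp,
    wignerCoords_one_zero, wignerCoords_zero_one, lineDerivOp_left_smul, lineDerivOp_left_add,
    lineDerivOp_left_neg, wignerComp_apply]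
  have h2 : (Real.sqrt 2 : ℂ) ^ 2 = 2 := by norm_cast; exact Real.sq_sqrt zero_le_two
  simp only [← Complex.coe_smul, smul_eq_mul]
  push_cast
  field_simp
  linear_combination
    (-((x : ℂ) - p) * F ((x + p) / Real.sqrt 2, (x - p) / Real.sqrt 2)) * h2

theorem extW_eq_partialFourier {G : ℝ → ℝ → ℂ} {Φ : 𝓢(ℝ × ℝ, ℂ)}
    (h : ∀ x p, G ((x + p) / Real.sqrt 2) ((x - p) / Real.sqrt 2) = Φ (x, p)) (x y : ℝ) :
    ExtW G x y = (Real.sqrt (2 * Real.pi) : ℂ)⁻¹ * partialFourier x y Φ := by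
  simp only [ExtW, partialFourier_apply, h, smul_eq_mul]

/-- The extended Wigner transform intertwines the annihilation operators. -/
theorem extW_intertwine_annihilation (F : SchwartzMap (ℝ × ℝ) ℂ) (x y : ℝ) :
    Apop (ExtW (fun a b => F (a, b))) x y
        = ExtW (a1op (fun a b => F (a, b))) x y ∧
    Amop (ExtW (fun a b => F (a, b))) x y
        = ExtW (a2op (fun a b => F (a, b))) x y := by
  have hF := extW_eq_partialFourier (G := fun a b => F (a, b)) fun x p =>
    (wignerComp_apply F x p).symm
  have hdx : HasDerivAt (fun t => ExtW (fun a b => F (a, b)) t y)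
      ((Real.sqrt (2 * Real.pi) : ℂ)⁻¹ *
        partialFourier x y (∂_{((1 : ℝ), (0 : ℝ))} (wignerComp F))) x := by
    simpa only [hF] using (hasDerivAt_partialFourier_fst (wignerComp F) x y).const_mul _
  have hdy : HasDerivAt (fun s => ExtW (fun a b => F (a, b)) x s)
      ((Real.sqrt (2 * Real.pi) : ℂ)⁻¹ *
        (Complex.I • partialFourier x y (smulLeftCLM ℂ Prod.snd (wignerComp F)))) y := by
    simpa only [hF] using (hasDerivAt_partialFourier_snd (wignerComp F) x y).const_mul _
  constructor
  · rw [Apop, hdx.deriv, hdy.deriv, hF, extW_eq_partialFourier (a1op_wignerCoords F)]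
    simp only [map_smul, map_add, partialFourier_smulLeftCLM_fst, partialFourier_lineDerivOp_snd,
      smul_eq_mul, Complex.real_smul]
    linear_combination (-(1 / 2) * (Real.sqrt (2 * Real.pi) : ℂ)⁻¹ *
      partialFourier x y (smulLeftCLM ℂ Prod.snd (wignerComp F))) * Complex.I_mul_I
  · rw [Amop, hdx.deriv, hdy.deriv, hF, extW_eq_partialFourier (a2op_wignerCoords F)]
    simp only [map_smul, map_add, map_sub, partialFourier_smulLeftCLM_fst,
      partialFourier_lineDerivOp_snd, smul_eq_mul, Complex.real_smul]
    linear_combination ((1 / 2) * (Real.sqrt (2 * Real.pi) : ℂ)⁻¹ *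
      partialFourier x y (smulLeftCLM ℂ Prod.snd (wignerComp F))) * Complex.I_mul_I
end
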